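/- Let α ∈ (1,2] and c > 0, so c_α = c^{1−α}/(α−1) > 0. Define L : ℝ → ℝ by L(x) = −c_α·F(1 + x/c_α; α−1) + c_α for x ≥ −c_α, and L(x) = −x for x < −c_α, where F(z;b) = ∫₀^z 1/(1 + t^{1/b}) dt. Then L is differentiable at every x ∈ ℝ and L'(x) = s_{α,c}(x) − 1 for all x ∈ ℝ; i.e., L is the virtual SIGTRON-induced loss function for α ∈ (1,2]. -/

import Mathlib

/-- `c_α = c^{1−α}/(α−1)` (real power). -/
noncomputable def cA (α c : ℝ) : ℝ := c ^ (1 - α) / (α - 1)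

/-- SIGTRON: extended asymmetric sigmoid with Perceptron. -/
noncomputable def sigtron (α c : ℝ) (x : ℝ) : ℝ :=
  if α = 1 then 1 / (1 + Real.exp (-x))
  else if α < 1 then
    if x ≤ -(cA α c) then 1 / (1 + (1 + x / cA α c) ^ ((1 : ℝ) / (1 - α))) else 1
  else
    if -(cA α c) < x then 1 / (1 + (1 + x / cA α c) ^ ((1 : ℝ) / (1 - α))) else 0

/-- `F(z;b) = ∫₀^z 1/(1 + t^{1/b}) dt`. -/
noncomputable def Fint (z b : ℝ) : ℝ := ∫ t in (0 : ℝ)..z, 1 / (1 + t ^ ((1 : ℝ) / b))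


/-- Virtual SIGTRON-induced loss for `α ∈ (1,2]`:
`L(x) = −c_α·F(1+x/c_α; α−1) + c_α` for `x ≥ −c_α`, and `L(x) = −x` otherwise. -/
noncomputable def lossGT (α c : ℝ) (x : ℝ) : ℝ :=
  if -(cA α c) ≤ x then -(cA α c) * Fint (1 + x / cA α c) (α - 1) + cA α c else -x

/-!
On `x ≥ -c_α` the loss is `-c_α F(1 + x/c_α) + c_α`, whose derivative is, by the fundamental
theorem of calculus and the chain rule, `-1/(1 + (1 + x/c_α)^{1/(α-1)}) = s_{α,c}(x) - 1`. At the
junction `x = -c_α` this equals `-1`, the slope of the linear branch `-x`, and both branches take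
the value `c_α` there, so the one-sided derivatives glue to a derivative.
-/

open Set

/-- For `t < 0`, `Real.rpow` gives `t ^ p = |t| ^ p * cos (p π)`, still of absolute value `< 1`. -/
lemma one_add_rpow_pos {p t : ℝ} (hp : 0 < p) (ht : -1 < t) : 0 < 1 + t ^ p := by
  rcases le_or_gt 0 t with ht0 | ht0
  · linarith [Real.rpow_nonneg ht0 p]
  · have habs : |t| < 1 := by rw [abs_of_neg ht0]; linarith
    have hlt : |t ^ p| < 1 :=
      (Real.abs_rpow_le_abs_rpow t p).trans_lt (Real.rpow_lt_one (abs_nonneg t) habs hp)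
    linarith [(abs_lt.mp hlt).1]

lemma continuousOn_one_div_one_add_rpow {p : ℝ} (hp : 0 < p) :
    ContinuousOn (fun t : ℝ => 1 / (1 + t ^ p)) (Ioi (-1)) := by
  have hrpow : Continuous fun t : ℝ => t ^ p :=
    continuous_iff_continuousAt.mpr fun t => Real.continuousAt_rpow_const t p (Or.inr hp.le)
  exact continuousOn_const.div (continuous_const.add hrpow).continuousOn
    fun t ht => (one_add_rpow_pos hp ht).ne'

lemma hasDerivAt_Fint {b z : ℝ} (hb : 0 < b) (hz : -1 < z) :
    HasDerivAt (fun z => Fint z b) (1 / (1 + z ^ ((1 : ℝ) / b))) z := by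
  have hcont := continuousOn_one_div_one_add_rpow (one_div_pos.mpr hb)
  have hsub : uIcc 0 z ⊆ Ioi (-1) := fun t ht =>
    (lt_inf_iff.mpr ⟨by norm_num, hz⟩).trans_le ht.1
  exact intervalIntegral.integral_hasDerivAt_right ((hcont.mono hsub).intervalIntegrable)
    (hcont.stronglyMeasurableAtFilter isOpen_Ioi z hz)
    (hcont.continuousAt (isOpen_Ioi.mem_nhds hz))

lemma cA_pos {α c : ℝ} (hα : 1 < α) (hc : 0 < c) : 0 < cA α c :=
  div_pos (Real.rpow_pos_of_pos hc _) (sub_pos.mpr hα)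

lemma sigtron_of_le {α c x : ℝ} (hα : 1 < α) (hx : x ≤ -cA α c) : sigtron α c x = 0 := by
  simp [sigtron, hα.ne', hα.not_gt, hx.not_gt]

lemma sigtron_sub_one_of_ge {α c x : ℝ} (hα : 1 < α) (hc : 0 < c) (hx : -cA α c ≤ x) :
    sigtron α c x - 1 = -(1 / (1 + (1 + x / cA α c) ^ ((1 : ℝ) / (α - 1)))) := by
  have ha := cA_pos hα hc
  have hexp : (0 : ℝ) < 1 / (α - 1) := one_div_pos.mpr (sub_pos.mpr hα)
  rcases hx.eq_or_lt with rfl | hx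
  · rw [sigtron_of_le hα le_rfl, neg_div, div_self ha.ne', add_neg_cancel,
      Real.zero_rpow hexp.ne']
    norm_num
  · have hz : 0 < 1 + x / cA α c := by
      have : -1 < x / cA α c := by rw [lt_div_iff₀ ha]; linarith
      linarith
    have hu := Real.rpow_pos_of_pos hz (1 / (α - 1))
    have hflip : (1 + x / cA α c) ^ ((1 : ℝ) / (1 - α)) =
        ((1 + x / cA α c) ^ ((1 : ℝ) / (α - 1)))⁻¹ := by
      rw [← Real.rpow_neg hz.le, ← one_div_neg_eq_neg_one_div, neg_sub]
    simp only [sigtron, hα.ne', hα.not_gt, if_false, if_pos hx]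
    rw [hflip]
    generalize (1 + x / cA α c) ^ ((1 : ℝ) / (α - 1)) = u at hu ⊢
    field_simp
    ring

lemma lossGT_of_le {α c x : ℝ} (hα : 1 < α) (hc : 0 < c) (hx : x ≤ -cA α c) :
    lossGT α c x = -x := by
  rcases hx.eq_or_lt with rfl | hx
  · have hz : 1 + -cA α c / cA α c = 0 := by
      rw [neg_div, div_self (cA_pos hα hc).ne', add_neg_cancel]
    simp [lossGT, hz, Fint]
  · simp [lossGT, hx.not_ge]

lemma hasDerivAt_lossGT_branch {α c x : ℝ} (hα : 1 < α) (hc : 0 < c) (hx : -cA α c ≤ x) :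
    HasDerivAt (fun y => -cA α c * Fint (1 + y / cA α c) (α - 1) + cA α c)
      (sigtron α c x - 1) x := by
  have ha := cA_pos hα hc
  have hz : -1 < 1 + x / cA α c := by
    have : -1 ≤ x / cA α c := by rw [le_div_iff₀ ha]; linarith
    linarith
  have hinner : HasDerivAt (fun y => 1 + y / cA α c) (1 / cA α c) x := by
    simpa [one_div] using ((hasDerivAt_id x).div_const (cA α c)).const_add 1
  have hF := ((hasDerivAt_Fint (sub_pos.mpr hα) hz).comp x hinner).const_mul (-cA α c)
  refine (hF.add_const (cA α c)).congr_deriv ?_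
  rw [sigtron_sub_one_of_ge hα hc hx]
  field_simp

lemma hasDerivAt_of_hasDerivWithinAt_Iic_Ici {f f' : ℝ → ℝ} {a : ℝ}
    (hleft : ∀ x ≤ a, HasDerivWithinAt f (f' x) (Iic a) x)
    (hright : ∀ x ≥ a, HasDerivWithinAt f (f' x) (Ici a) x) (x : ℝ) :
    HasDerivAt f (f' x) x := by
  rcases lt_trichotomy x a with hx | rfl | hx
  · exact (hleft x hx.le).hasDerivAt (Iic_mem_nhds hx)
  · simpa [Iic_union_Ici] using (hleft x le_rfl).union (hright x le_rfl)
  · exact (hright x hx.le).hasDerivAt (Ici_mem_nhds hx)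

/-- For `α ∈ (1,2]` and `c > 0`, the function `L = lossGT α c` is
differentiable at every `x ∈ ℝ` with `L'(x) = s_{α,c}(x) − 1`. -/
theorem sigtron_stmt12 (α c : ℝ) (hα : α ∈ Set.Ioc (1 : ℝ) 2) (hc : 0 < c) (x : ℝ) :
    HasDerivAt (lossGT α c) (sigtron α c x - 1) x := by
  refine hasDerivAt_of_hasDerivWithinAt_Iic_Ici (f' := fun y => sigtron α c y - 1)
    (a := -cA α c) (fun y hy => ?_) (fun y hy => ?_) x
  · have hneg : HasDerivAt (fun y => -y) (sigtron α c y - 1) y := by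
      simpa [sigtron_of_le hα.1 hy] using hasDerivAt_neg y
    exact hneg.hasDerivWithinAt.congr_of_mem (fun z hz => lossGT_of_le hα.1 hc hz) hy
  · exact (hasDerivAt_lossGT_branch hα.1 hc hy).hasDerivWithinAt.congr_of_mem
      (fun z hz => if_pos hz) hy
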